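/- Let X have a three times continuously differentiable density f_X and let A be a real random variable such that μ_A(x) = E(A|X=x) is well defined and three times one-sided differentiable at 0, with the one-sided derivatives extending continuously to 0 and the third one-sided derivatives bounded near 0. Let K be a continuous symmetric kernel supported in [−1,1] with ∫K = 1 and K^{(4)} < ∞ (so that κ(K) is invertible). Set τ_A = μ_{A+} − μ_{A−} and B(K,A) = (1/2)·κ(K)^{−1}·[ (K_+^{(2)}, K_+^{(2)}, K_+^{(3)}, K_+^{(3)})^⊤·(μ_Af_X)''_+ + (K_−^{(2)}, 0, K_−^{(3)}, 0)^⊤·(μ_Af_X)''_− ]. Then, as h → 0: κ(K)^{−1}·E(K_h(X)·V·A) = ( f_X(0)μ_{A−}, f_X(0)τ_A, h·(μ_Af_X)'_−, h·((μ_Af_X)'_+ − (μ_Af_X)'_−) )^⊤ + h²·B(K,A) + O(h³), where V = (1, 1{X≥0}, X/h, 1{X≥0}X/h)^⊤ and K_h(x) = K(x/h)/h. -/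

import Mathlib

open MeasureTheory ProbabilityTheory Filter Asymptotics Set
open scoped ENNReal NNReal Matrix

noncomputable section

/-- Indicator `1{x ≥ 0}`. -/
def indPos (x : ℝ) : ℝ := if 0 ≤ x then 1 else 0

/-- The RD design vector `V = (1, 1{x≥0}, x/h, 1{x≥0}·x/h)`. -/
def Vvec (h x : ℝ) : Fin 4 → ℝ := ![1, indPos x, x / h, indPos x * (x / h)]

/-- Kernel weight `K_h(x) = K(x/h)/h`. -/
def Kh (K : ℝ → ℝ) (h x : ℝ) : ℝ := K (x / h) / h

/-- `a`-th moment of the kernel. -/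
def kmom (K : ℝ → ℝ) (a : ℕ) : ℝ := ∫ u, u ^ a * K u

/-- One-sided moment `K_+^{(a)}`. -/
def kmomP (K : ℝ → ℝ) (a : ℕ) : ℝ := ∫ u in Set.Ioi (0 : ℝ), u ^ a * K u

/-- One-sided moment `K_−^{(a)}`. -/
def kmomM (K : ℝ → ℝ) (a : ℕ) : ℝ := ∫ u in Set.Iio (0 : ℝ), u ^ a * K u

/-- The 4×4 kernel matrix κ(K). -/
def kappa (K : ℝ → ℝ) : Matrix (Fin 4) (Fin 4) ℝ :=
  !![kmom K 0, kmomP K 0, kmom K 1, kmomP K 1;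
     kmomP K 0, kmomP K 0, kmomP K 1, kmomP K 1;
     kmom K 1, kmomP K 1, kmom K 2, kmomP K 2;
     kmomP K 1, kmomP K 1, kmomP K 2, kmomP K 2]


lemma abs_le_of_mem_uIcc {x t : ℝ} (hx : x ∈ Set.uIcc (0:ℝ) t) : |x| ≤ |t| := by
  rw [Set.mem_uIcc] at hx
  apply abs_le.mpr
  rcases hx with ⟨h1, h2⟩ | ⟨h1, h2⟩
  · exact ⟨le_trans (neg_nonpos.mpr (abs_nonneg t)) h1, le_trans h2 (le_abs_self t)⟩
  · exact ⟨le_trans (neg_abs_le t) h1, le_trans h2 (abs_nonneg t)⟩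

/-- Step lemma: integrate a bound once. -/
lemma step_bound {u v : ℝ → ℝ} {C : ℝ} (hC : 0 ≤ C) (k : ℕ)
    (hu : ∀ x, HasDerivAt u (v x) x)
    (hv : ∀ x : ℝ, |x| ≤ 1 → |v x| ≤ C * |x| ^ k) (hu0 : u 0 = 0) :
    ∀ t : ℝ, |t| ≤ 1 → |u t| ≤ C * |t| ^ (k + 1) := by
  intro t ht
  have hs : Convex ℝ (Set.uIcc (0:ℝ) t) := convex_uIcc _ _
  have key := Convex.norm_image_sub_le_of_norm_hasDerivWithin_le
    (f := u) (f' := v) (C := C * |t| ^ k) (s := Set.uIcc (0:ℝ) t)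
    (fun x hx => (hu x).hasDerivWithinAt)
    (fun x hx => by
      have h1 : |x| ≤ |t| := abs_le_of_mem_uIcc hx
      have h2 : |x| ≤ 1 := le_trans h1 ht
      calc ‖v x‖ = |v x| := rfl
        _ ≤ C * |x| ^ k := hv x h2
        _ ≤ C * |t| ^ k := by
            apply mul_le_mul_of_nonneg_left _ hC
            exact pow_le_pow_left₀ (abs_nonneg x) h1 k)
    hs (Set.left_mem_uIcc) (Set.right_mem_uIcc)
  rw [hu0, sub_zero, sub_zero] at key
  calc |u t| = ‖u t‖ := rfl
    _ ≤ C * |t| ^ k * ‖t‖ := key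
    _ = C * |t| ^ (k + 1) := by rw [Real.norm_eq_abs, pow_succ]; ring

/-- Third-order Taylor remainder bound on `[-1,1]` for a `C³` function. -/
lemma taylor_bound {g : ℝ → ℝ} (hg : ContDiff ℝ 3 g) :
    ∃ C : ℝ, 0 ≤ C ∧ ∀ t : ℝ, |t| ≤ 1 →
      |g t - g 0 - deriv g 0 * t - deriv (deriv g) 0 * t ^ 2 / 2| ≤ C * |t| ^ 3 := by
  have hg2 : ContDiff ℝ 2 (deriv g) := by
    have := (contDiff_succ_iff_deriv (f := g) (n := 2)).mp (by norm_num; exact hg)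
    exact this.2.2
  have hg1 : ContDiff ℝ 1 (deriv (deriv g)) := by
    have := (contDiff_succ_iff_deriv (f := deriv g) (n := 1)).mp (by norm_num; exact hg2)
    exact this.2.2
  have hg3cont : Continuous (deriv (deriv (deriv g))) := hg1.continuous_deriv le_rfl
  -- bound on third derivative on [-1,1]
  obtain ⟨M0, hM0⟩ := (isCompact_Icc (a := (-1:ℝ)) (b := 1)).exists_bound_of_continuousOn
    hg3cont.continuousOn
  set M : ℝ := max M0 0 with hM
  have hMnonneg : 0 ≤ M := le_max_right _ _
  have hM3 : ∀ x : ℝ, |x| ≤ 1 → |deriv (deriv (deriv g)) x| ≤ M * |x| ^ 0 := by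
    intro x hx
    simp only [pow_zero, mul_one]
    exact le_trans (hM0 x (abs_le.mp hx |> fun h => ⟨h.1, h.2⟩)) (le_max_left _ _)
  refine ⟨M, hMnonneg, ?_⟩
  -- r2
  have h2d : ∀ x : ℝ, HasDerivAt (fun y => deriv (deriv g) y - deriv (deriv g) 0)
      (deriv (deriv (deriv g)) x) x := by
    intro x
    exact ((hg1.differentiable one_ne_zero x).hasDerivAt).sub_const _
  have hr2 := step_bound hMnonneg 0 h2d hM3 (by simp)
  -- r1
  have h1d : ∀ x : ℝ, HasDerivAt
      (fun y => deriv g y - deriv g 0 - deriv (deriv g) 0 * y)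
      (deriv (deriv g) x - deriv (deriv g) 0) x := by
    intro x
    have h1 : HasDerivAt (deriv g) (deriv (deriv g) x) x :=
      (hg2.differentiable (by norm_num) x).hasDerivAt
    have h2 : HasDerivAt (fun y : ℝ => deriv (deriv g) 0 * y) (deriv (deriv g) 0) x := by
      simpa using (hasDerivAt_id x).const_mul (deriv (deriv g) 0)
    exact (h1.sub_const _).sub h2
  have hr1 := step_bound hMnonneg 1 h1d (fun x hx => hr2 x hx) (by simp)
  -- r0
  have h0d : ∀ x : ℝ, HasDerivAt
      (fun y => g y - g 0 - deriv g 0 * y - deriv (deriv g) 0 * y ^ 2 / 2)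
      (deriv g x - deriv g 0 - deriv (deriv g) 0 * x) x := by
    intro x
    have h1 : HasDerivAt g (deriv g x) x := (hg.differentiable (by norm_num) x).hasDerivAt
    have h2 : HasDerivAt (fun y : ℝ => deriv g 0 * y) (deriv g 0) x := by
      simpa using (hasDerivAt_id x).const_mul (deriv g 0)
    have h3 : HasDerivAt (fun y : ℝ => deriv (deriv g) 0 * y ^ 2 / 2)
        (deriv (deriv g) 0 * x) x := by
      have := ((hasDerivAt_pow 2 x).const_mul (deriv (deriv g) 0)).div_const 2
      simpa using this.congr_deriv (by ring)
    exact ((h1.sub_const _).sub h2).sub h3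
  have hr0 := step_bound hMnonneg 2 h0d (fun x hx => hr1 x hx) (by simp)
  intro t ht
  simpa using hr0 t ht


/-- a continuous function vanishing outside `[-1,1]` is integrable. -/
lemma integrable_of_cont_supp {F : ℝ → ℝ} (hF : Continuous F)
    (hsupp : ∀ u : ℝ, u ∉ Set.Icc (-1:ℝ) 1 → F u = 0) :
    Integrable F := by
  apply hF.integrable_of_hasCompactSupport
  apply HasCompactSupport.intro (isCompact_Icc (a := (-1:ℝ)) (b := 1))
  exact hsupp

lemma key_integral {K : ℝ → ℝ} (hKcont : Continuous K) (hKnonneg : ∀ u, 0 ≤ K u)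
    (hKsupp : ∀ u : ℝ, u ∉ Set.Icc (-1:ℝ) 1 → K u = 0) (hKone : (∫ u, K u) = 1)
    {g : ℝ → ℝ} (hg : ContDiff ℝ 3 g) (j : ℕ) (s : Set ℝ) (hs : MeasurableSet s)
    {C : ℝ} (hC0 : 0 ≤ C)
    (hC : ∀ t : ℝ, |t| ≤ 1 →
      |g t - g 0 - deriv g 0 * t - deriv (deriv g) 0 * t ^ 2 / 2| ≤ C * |t| ^ 3) :
    ∀ h : ℝ, 0 < h → h ≤ 1 →
    |(∫ u in s, u ^ j * K u * g (h * u))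
      - g 0 * (∫ u in s, u ^ j * K u) - deriv g 0 * h * (∫ u in s, u ^ (j+1) * K u)
      - deriv (deriv g) 0 / 2 * h ^ 2 * (∫ u in s, u ^ (j+2) * K u)| ≤ C * h ^ 3 := by
  intro h hh0 hh1
  set g1 := deriv g 0
  set g2 := deriv (deriv g) 0
  set r : ℝ → ℝ := fun t => g t - g 0 - g1 * t - g2 * t ^ 2 / 2 with hr
  have hKint : Integrable K := integrable_of_cont_supp hKcont hKsupp
  have hpow : ∀ a : ℕ, Integrable (fun u : ℝ => u ^ a * K u) := by
    intro a
    exact integrable_of_cont_supp ((continuous_pow a).mul hKcont)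
      (fun u hu => by rw [hKsupp u hu, mul_zero])
  have hrcont : Continuous r :=
    ((hg.continuous.sub continuous_const).sub (continuous_const.mul continuous_id)).sub
      ((continuous_const.mul (continuous_pow 2)).div_const 2)
  have hRcont : Continuous (fun u : ℝ => u ^ j * K u * r (h * u)) :=
    ((continuous_pow j).mul hKcont).mul (hrcont.comp (continuous_const.mul continuous_id))
  have hRint : Integrable (fun u : ℝ => u ^ j * K u * r (h * u)) :=
    integrable_of_cont_supp hRcont (fun u hu => by rw [hKsupp u hu]; ring)
  -- pointwise decomposition
  have hdecomp : ∀ u : ℝ, u ^ j * K u * g (h * u) =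
      g 0 * (u ^ j * K u) + g1 * h * (u ^ (j+1) * K u)
      + g2 / 2 * h ^ 2 * (u ^ (j+2) * K u) + u ^ j * K u * r (h * u) := by
    intro u
    simp only [hr]
    ring
  have hint1 : IntegrableOn (fun u : ℝ => g 0 * (u ^ j * K u)) s := ((hpow j).const_mul _).integrableOn
  have hint2 : IntegrableOn (fun u : ℝ => g1 * h * (u ^ (j+1) * K u)) s := ((hpow (j+1)).const_mul _).integrableOn
  have hint3 : IntegrableOn (fun u : ℝ => g2 / 2 * h ^ 2 * (u ^ (j+2) * K u)) s := ((hpow (j+2)).const_mul _).integrableOn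
  have hint4 : IntegrableOn (fun u : ℝ => u ^ j * K u * r (h * u)) s := hRint.integrableOn
  have hsplit : (∫ u in s, u ^ j * K u * g (h * u))
      = g 0 * (∫ u in s, u ^ j * K u) + g1 * h * (∫ u in s, u ^ (j+1) * K u)
      + g2 / 2 * h ^ 2 * (∫ u in s, u ^ (j+2) * K u)
      + ∫ u in s, u ^ j * K u * r (h * u) := by
    calc (∫ u in s, u ^ j * K u * g (h * u))
        = ∫ u in s, (g 0 * (u ^ j * K u) + g1 * h * (u ^ (j+1) * K u)
            + g2 / 2 * h ^ 2 * (u ^ (j+2) * K u) + u ^ j * K u * r (h * u)) :=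
          integral_congr_ae (Filter.Eventually.of_forall (fun u => hdecomp u))
      _ = (∫ u in s, (g 0 * (u ^ j * K u) + g1 * h * (u ^ (j+1) * K u)
            + g2 / 2 * h ^ 2 * (u ^ (j+2) * K u))) + ∫ u in s, u ^ j * K u * r (h * u) :=
          integral_add ((hint1.add hint2).add hint3) hint4
      _ = ((∫ u in s, (g 0 * (u ^ j * K u) + g1 * h * (u ^ (j+1) * K u)))
            + ∫ u in s, g2 / 2 * h ^ 2 * (u ^ (j+2) * K u)) + ∫ u in s, u ^ j * K u * r (h * u) := by
          congr 1
          exact integral_add (hint1.add hint2) hint3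
      _ = (((∫ u in s, g 0 * (u ^ j * K u)) + ∫ u in s, g1 * h * (u ^ (j+1) * K u))
            + ∫ u in s, g2 / 2 * h ^ 2 * (u ^ (j+2) * K u)) + ∫ u in s, u ^ j * K u * r (h * u) := by
          congr 2
          exact integral_add hint1 hint2
      _ = g 0 * (∫ u in s, u ^ j * K u) + g1 * h * (∫ u in s, u ^ (j+1) * K u)
            + g2 / 2 * h ^ 2 * (∫ u in s, u ^ (j+2) * K u)
            + ∫ u in s, u ^ j * K u * r (h * u) := by
          rw [integral_const_mul (μ := volume.restrict s) (g 0),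
            integral_const_mul (μ := volume.restrict s) (g1 * h),
            integral_const_mul (μ := volume.restrict s) (g2 / 2 * h ^ 2)]
  have hRdom : ∀ u : ℝ, |u ^ j * K u * r (h * u)| ≤ C * h ^ 3 * K u := by
    intro u
    by_cases hu : u ∈ Set.Icc (-1:ℝ) 1
    · have hu1 : |u| ≤ 1 := abs_le.mpr ⟨hu.1, hu.2⟩
      have hhu : |h * u| ≤ 1 := by
        rw [abs_mul, abs_of_pos hh0]
        calc h * |u| ≤ 1 * 1 := mul_le_mul hh1 hu1 (abs_nonneg u) zero_le_one
          _ = 1 := by ring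
      have hrb : |r (h * u)| ≤ C * h ^ 3 := by
        calc |r (h * u)| ≤ C * |h * u| ^ 3 := hC _ hhu
          _ ≤ C * h ^ 3 := by
              apply mul_le_mul_of_nonneg_left _ hC0
              rw [abs_mul, abs_of_pos hh0]
              calc (h * |u|) ^ 3 ≤ (h * 1) ^ 3 := by
                    apply pow_le_pow_left₀ (mul_nonneg hh0.le (abs_nonneg u))
                    exact mul_le_mul_of_nonneg_left hu1 hh0.le
                _ = h ^ 3 := by ring
      calc |u ^ j * K u * r (h * u)| = |u| ^ j * K u * |r (h * u)| := by
            rw [abs_mul, abs_mul, abs_pow, abs_of_nonneg (hKnonneg u)]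
        _ ≤ 1 * K u * (C * h ^ 3) := by
            apply mul_le_mul _ hrb (abs_nonneg _) (mul_nonneg zero_le_one (hKnonneg u))
            apply mul_le_mul_of_nonneg_right _ (hKnonneg u)
            exact pow_le_one₀ (abs_nonneg u) hu1
        _ = C * h ^ 3 * K u := by ring
    · rw [hKsupp u hu]
      simp
  calc |(∫ u in s, u ^ j * K u * g (h * u))
      - g 0 * (∫ u in s, u ^ j * K u) - g1 * h * (∫ u in s, u ^ (j+1) * K u)
      - g2 / 2 * h ^ 2 * (∫ u in s, u ^ (j+2) * K u)|
      = |∫ u in s, u ^ j * K u * r (h * u)| := by rw [hsplit]; congr 1; ring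
    _ ≤ ∫ u in s, |u ^ j * K u * r (h * u)| := by
        have := norm_integral_le_integral_norm (μ := volume.restrict s)
          (fun u => u ^ j * K u * r (h * u))
        simpa only [Real.norm_eq_abs] using this
    _ ≤ ∫ u in s, C * h ^ 3 * K u := by
        apply setIntegral_mono hint4.abs ((hKint.const_mul _).integrableOn)
        exact hRdom
    _ = C * h ^ 3 * ∫ u in s, K u := integral_const_mul _ _
    _ ≤ C * h ^ 3 * ∫ u, K u := by
        apply mul_le_mul_of_nonneg_left _ (mul_nonneg hC0 (pow_nonneg hh0.le 3))
        exact setIntegral_le_integral hKint (Filter.Eventually.of_forall hKnonneg)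
    _ = C * h ^ 3 := by rw [hKone, mul_one]

lemma indPos_meas : Measurable indPos := by
  unfold indPos
  exact Measurable.ite measurableSet_Ici measurable_const measurable_const

lemma abs_indPos_le (x : ℝ) : |indPos x| ≤ 1 := by
  unfold indPos; split <;> simp

lemma Vvec_meas (h : ℝ) (a' : Fin 4) : Measurable (fun x => Vvec h x a') := by
  fin_cases a' <;> simp only [Vvec, Matrix.cons_val_zero, Matrix.cons_val_one,
    Matrix.head_cons, Matrix.cons_val_two, Matrix.tail_cons, Matrix.cons_val_three]
  · exact measurable_const
  · exact indPos_meas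
  · exact measurable_id.div_const h
  · exact indPos_meas.mul (measurable_id.div_const h)

lemma Vvec_abs_le {h x : ℝ} (hx : |x / h| ≤ 1) (a' : Fin 4) : |Vvec h x a'| ≤ 1 := by
  fin_cases a'
  · show |(1:ℝ)| ≤ 1; simp
  · exact abs_indPos_le x
  · exact hx
  · show |indPos x * (x / h)| ≤ 1
    rw [abs_mul]
    calc |indPos x| * |x / h| ≤ 1 * 1 := by
          apply mul_le_mul (abs_indPos_le x) hx (abs_nonneg _) zero_le_one
      _ = 1 := one_mul 1
lemma Vvec_rescale {h x : ℝ} (hh : 0 < h) (a' : Fin 4) : Vvec h x a' = Vvec 1 (x / h) a' := by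
  have hiff : 0 ≤ x / h ↔ 0 ≤ x := by rw [le_div_iff₀ hh, zero_mul]
  have hind : indPos (x / h) = indPos x := by
    unfold indPos
    by_cases h0 : 0 ≤ x
    · rw [if_pos (hiff.mpr h0), if_pos h0]
    · rw [if_neg (fun hc => h0 (hiff.mp hc)), if_neg h0]
  fin_cases a' <;> simp [Vvec, hind]

lemma rep_integral {Ω : Type*} [MeasurableSpace Ω] (P : Measure Ω) [IsProbabilityMeasure P]
    (X A : Ω → ℝ) (hXmeas : Measurable X) (hAint : Integrable A P)
    (f : ℝ → ℝ) (hfmeas : Measurable f) (hfnonneg : ∀ x, 0 ≤ f x)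
    (hdens : Measure.map X P = volume.withDensity fun x => ENNReal.ofReal (f x))
    (μA : ℝ → ℝ)
    (hμA : (fun ω => μA (X ω)) =ᵐ[P] P[A | MeasurableSpace.comap X (by infer_instance)])
    (qp qm : ℝ → ℝ) (hqpm : Measurable qp) (hqmm : Measurable qm)
    (ε : ℝ) (hagreeP : ∀ x ∈ Set.Ioo (0:ℝ) ε, μA x = qp x)
    (hagreeM : ∀ x ∈ Set.Ioo (-ε) (0:ℝ), μA x = qm x)
    (K : ℝ → ℝ) (hKcont : Continuous K)
    (hKsupp : ∀ u : ℝ, u ∉ Set.Icc (-1:ℝ) 1 → K u = 0)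
    (a' : Fin 4) {h : ℝ} (hh0 : 0 < h) (hhε : h < ε) :
    ∫ ω, Kh K h (X ω) * Vvec h (X ω) a' * A ω ∂P
      = ∫ u, K u * Vvec 1 u a' *
          ((if h * u < 0 then qm (h * u) else qp (h * u)) * f (h * u)) := by
  have hm : MeasurableSpace.comap X Real.measurableSpace ≤ _ := hXmeas.comap_le
  -- the bounded weight function b
  set b : ℝ → ℝ := fun x => Kh K h x * Vvec h x a' with hbdef
  have hbmeas : Measurable b := by
    apply Measurable.mul _ (Vvec_meas h a')
    exact (hKcont.measurable.comp (measurable_id.div_const h)).div_const h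
  -- bound for K
  obtain ⟨MK, hMK⟩ := (isCompact_Icc (a := (-1:ℝ)) (b := 1)).exists_bound_of_continuousOn
    hKcont.continuousOn
  have hKbd : ∀ u : ℝ, |K u| ≤ max MK 0 := by
    intro u
    by_cases hu : u ∈ Set.Icc (-1:ℝ) 1
    · exact le_trans (hMK u hu) (le_max_left _ _)
    · rw [hKsupp u hu]; simp
  have hbbd : ∀ x : ℝ, |b x| ≤ max MK 0 / h := by
    intro x
    by_cases hx : x / h ∈ Set.Icc (-1:ℝ) 1
    · have h1 : |x / h| ≤ 1 := abs_le.mpr ⟨hx.1, hx.2⟩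
      calc |b x| = |K (x / h)| / h * |Vvec h x a'| := by
            rw [hbdef]; simp only [Kh, abs_mul, abs_div, abs_of_pos hh0]
        _ ≤ max MK 0 / h * 1 := by
            apply mul_le_mul _ (Vvec_abs_le h1 a') (abs_nonneg _)
              (div_nonneg (le_max_right _ _) hh0.le)
            exact (div_le_div_iff_of_pos_right hh0).mpr (hKbd _)
        _ = max MK 0 / h := mul_one _
    · have : K (x / h) = 0 := hKsupp _ hx
      rw [hbdef]; simp only [Kh, this, zero_div, zero_mul, abs_zero]
      positivity
  -- b ∘ X is m-strongly measurable
  have hXm : Measurable[MeasurableSpace.comap X Real.measurableSpace] X :=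
    Measurable.of_comap_le le_rfl
  have hbXm : StronglyMeasurable[MeasurableSpace.comap X Real.measurableSpace]
      (fun ω => b (X ω)) :=
    (hbmeas.comp hXm).stronglyMeasurable
  have hbXA_int : Integrable (fun ω => b (X ω) * A ω) P :=
    hAint.bdd_mul (hbmeas.comp hXmeas).aestronglyMeasurable
      (c := max MK 0 / h) (Filter.Eventually.of_forall fun ω => hbbd (X ω))
  -- Step 1-2: conditional expectation
  have step1 : ∫ ω, b (X ω) * A ω ∂P = ∫ ω, b (X ω) * μA (X ω) ∂P := by
    calc ∫ ω, b (X ω) * A ω ∂P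
        = ∫ ω, (P[fun ω => b (X ω) * A ω | MeasurableSpace.comap X Real.measurableSpace]) ω ∂P :=
          (integral_condExp hm).symm
      _ = ∫ ω, b (X ω) * (P[A | MeasurableSpace.comap X Real.measurableSpace]) ω ∂P := by
          apply integral_congr_ae
          exact condExp_mul_of_stronglyMeasurable_left hbXm hbXA_int hAint
      _ = ∫ ω, b (X ω) * μA (X ω) ∂P := by
          apply integral_congr_ae
          filter_upwards [hμA] with ω hω
          rw [hω]
  -- Step 3: X ≠ 0 a.e.
  have hX0 : ∀ᵐ ω ∂P, X ω ≠ 0 := by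
    have hmap : Measure.map X P {0} = 0 := by
      rw [hdens, withDensity_apply _ (measurableSet_singleton 0)]
      exact setLIntegral_measure_zero _ _ (measure_singleton 0)
    have : P (X ⁻¹' {0}) = 0 := by
      rw [← Measure.map_apply hXmeas (measurableSet_singleton 0)]; exact hmap
    rw [ae_iff]
    have hset : {ω | ¬ X ω ≠ 0} = X ⁻¹' {0} := by ext ω; simp
    rw [hset]
    exact this
  -- Step 4: replace μA by q
  set q : ℝ → ℝ := fun x => if x < 0 then qm x else qp x with hqdef
  have hqmeas : Measurable q := Measurable.ite measurableSet_Iio hqmm hqpm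
  have step4 : ∫ ω, b (X ω) * μA (X ω) ∂P = ∫ ω, b (X ω) * q (X ω) ∂P := by
    apply integral_congr_ae
    filter_upwards [hX0] with ω hω
    by_cases hK0 : K (X ω / h) = 0
    · have hb0 : b (X ω) = 0 := by rw [hbdef]; simp [Kh, hK0]
      rw [hb0, zero_mul, zero_mul]
    · have hmem : X ω / h ∈ Set.Icc (-1:ℝ) 1 := by
        by_contra hc; exact hK0 (hKsupp _ hc)
      have hle : |X ω| ≤ h := by
        have := abs_le.mpr ⟨hmem.1, hmem.2⟩
        rwa [abs_div, abs_of_pos hh0, div_le_one hh0] at this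
      rcases lt_or_gt_of_ne hω with hneg | hpos
      · have hμq : μA (X ω) = qm (X ω) := by
          apply hagreeM
          constructor
          · have : -h ≤ X ω := (abs_le.mp hle).1
            linarith
          · exact hneg
        rw [hμq, hqdef]; simp only [if_pos hneg]
      · have hμq : μA (X ω) = qp (X ω) := by
          apply hagreeP
          exact ⟨hpos, lt_of_le_of_lt (le_trans (le_abs_self _) hle) hhε⟩
        rw [hμq, hqdef]; simp only [if_neg (not_lt.mpr hpos.le)]
  -- Step 5: pushforward to ℝ with density f
  have hFmeas : Measurable (fun x => b x * q x) := hbmeas.mul hqmeas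
  have step5 : ∫ ω, b (X ω) * q (X ω) ∂P = ∫ x, f x * (b x * q x) := by
    calc ∫ ω, b (X ω) * q (X ω) ∂P
        = ∫ x, b x * q x ∂(Measure.map X P) :=
          (integral_map hXmeas.aemeasurable hFmeas.aestronglyMeasurable).symm
      _ = ∫ x, b x * q x ∂(volume.withDensity fun x => ENNReal.ofReal (f x)) := by
          rw [hdens]
      _ = ∫ x, f x * (b x * q x) := by
          have : ∀ x : ℝ, ENNReal.ofReal (f x) = ((f x).toNNReal : ℝ≥0∞) := fun x => rfl
          simp_rw [this]
          rw [integral_withDensity_eq_integral_smul hfmeas.real_toNNReal]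
          apply integral_congr_ae
          apply Filter.Eventually.of_forall
          intro x
          show (f x).toNNReal • (b x * q x) = f x * (b x * q x)
          rw [NNReal.smul_def, smul_eq_mul, Real.coe_toNNReal _ (hfnonneg x)]
  -- Step 6: change of variables x = h u
  set Φ : ℝ → ℝ := fun u => K u * Vvec 1 u a' * (q (h * u) * f (h * u)) with hΦdef
  have step6 : ∫ x, f x * (b x * q x) = ∫ u, Φ u := by
    have hpt : ∀ x : ℝ, f x * (b x * q x) = Φ (x / h) / h := by
      intro x
      rw [hΦdef, hbdef]
      simp only [Kh]
      rw [Vvec_rescale hh0 a', mul_div_cancel₀ _ (ne_of_gt hh0)]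
      ring
    calc ∫ x, f x * (b x * q x) = ∫ x, Φ (x / h) / h := by simp_rw [hpt]
      _ = (∫ x, Φ (x / h)) / h := integral_div h _
      _ = (abs h • ∫ u, Φ u) / h := by rw [MeasureTheory.Measure.integral_comp_div Φ h]
      _ = ∫ u, Φ u := by
          rw [abs_of_pos hh0, smul_eq_mul, mul_div_cancel_left₀ _ (ne_of_gt hh0)]
  calc ∫ ω, Kh K h (X ω) * Vvec h (X ω) a' * A ω ∂P
      = ∫ ω, b (X ω) * A ω ∂P := rfl
    _ = ∫ u, Φ u := by rw [step1, step4, step5, step6]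
    _ = _ := by simp only [hΦdef, hqdef]

/-- second-order expansion of `κ(K)⁻¹ E(K_h(X) V A)` as `h → 0⁺`.
One-sided smoothness of `μ_A` is expressed through globally `C³` one-sided
representatives `qp` (right) and `qm` (left) that agree with `μ_A` near `0`. -/
theorem kernel_moment_vector_expansion
    {Ω : Type*} [MeasurableSpace Ω] (P : Measure Ω) [IsProbabilityMeasure P]
    (X A : Ω → ℝ) (hXmeas : Measurable X) (hAmeas : Measurable A)
    (hAint : Integrable A P)
    -- density of X, three times continuously differentiable
    (f : ℝ → ℝ) (hfmeas : Measurable f) (hfnonneg : ∀ x, 0 ≤ f x)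
    (hdens : Measure.map X P = volume.withDensity fun x => ENNReal.ofReal (f x))
    (hf : ContDiff ℝ 3 f)
    -- μ_A and its one-sided C³ representatives near zero
    (μA : ℝ → ℝ)
    (hμA : (fun ω => μA (X ω)) =ᵐ[P] P[A | MeasurableSpace.comap X (by infer_instance)])
    (qp qm : ℝ → ℝ) (hqp : ContDiff ℝ 3 qp) (hqm : ContDiff ℝ 3 qm)
    (ε : ℝ) (hε : 0 < ε)
    (hagreeP : ∀ x ∈ Set.Ioo (0 : ℝ) ε, μA x = qp x)
    (hagreeM : ∀ x ∈ Set.Ioo (-ε) (0 : ℝ), μA x = qm x)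
    -- kernel
    (K : ℝ → ℝ) (hKcont : Continuous K) (hKnonneg : ∀ u, 0 ≤ K u)
    (hKsymm : ∀ u, K (-u) = K u)
    (hKsupp : ∀ u : ℝ, u ∉ Set.Icc (-1 : ℝ) 1 → K u = 0)
    (hKone : (∫ u, K u) = 1)
    (hK4 : Integrable (fun u => u ^ 4 * K u))
    (hinv : IsUnit (kappa K)) :
    ∀ a : Fin 4,
      (fun h : ℝ =>
          Matrix.mulVec (kappa K)⁻¹
            (fun a' => ∫ ω, Kh K h (X ω) * Vvec h (X ω) a' * A ω ∂P) a -
          (![f 0 * qm 0, f 0 * (qp 0 - qm 0),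
              h * deriv (fun x => qm x * f x) 0,
              h * (deriv (fun x => qp x * f x) 0 - deriv (fun x => qm x * f x) 0)] a) -
          h ^ 2 * ((1 / 2 : ℝ) • Matrix.mulVec (kappa K)⁻¹
            (fun a' => ![kmomP K 2, kmomP K 2, kmomP K 3, kmomP K 3] a' *
                deriv (deriv fun x => qp x * f x) 0 +
              ![kmomM K 2, 0, kmomM K 3, 0] a' *
                deriv (deriv fun x => qm x * f x) 0) a)) =O[nhdsWithin (0 : ℝ) (Set.Ioi 0)]
        (fun h => h ^ 3) := by
  intro a
  set Gp : ℝ → ℝ := fun x => qp x * f x with hGp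
  set Gm : ℝ → ℝ := fun x => qm x * f x with hGm
  have hGpC : ContDiff ℝ 3 Gp := hqp.mul hf
  have hGmC : ContDiff ℝ 3 Gm := hqm.mul hf
  obtain ⟨Cp, hCp0, hCp⟩ := taylor_bound hGpC
  obtain ⟨Cm, hCm0, hCm⟩ := taylor_bound hGmC
  have hpow : ∀ n : ℕ, Integrable (fun u : ℝ => u ^ n * K u) := fun n =>
    integrable_of_cont_supp ((continuous_pow n).mul hKcont)
      (fun u hu => by rw [hKsupp u hu, mul_zero])
  have hkmom_split : ∀ n : ℕ, kmom K n = kmomM K n + kmomP K n := by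
    intro n
    rw [kmom, kmomM, kmomP, ← integral_Ici_eq_integral_Ioi,
      intervalIntegral.integral_Iio_add_Ici (hpow n).integrableOn (hpow n).integrableOn]
  have hdet : IsUnit (kappa K).det := (Matrix.isUnit_iff_isUnit_det _).mp hinv
  have hone : (kappa K)⁻¹ * kappa K = 1 := Matrix.nonsing_inv_mul _ hdet
  set CA : ℝ := ∑ j : Fin 4, |(kappa K)⁻¹ a j| with hCA
  have hCA0 : 0 ≤ CA := Finset.sum_nonneg (fun j _ => abs_nonneg _)
  rw [Asymptotics.isBigO_iff]
  refine ⟨CA * (Cm + Cp), ?_⟩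
  have hδ : (0:ℝ) < min ε 1 := lt_min hε one_pos
  filter_upwards [Ioo_mem_nhdsGT_of_mem (Set.left_mem_Ico.mpr hδ)] with h hh
  obtain ⟨hh0, hhδ⟩ := hh
  have hhε : h < ε := lt_of_lt_of_le hhδ (min_le_left _ _)
  have hh1 : h ≤ 1 := le_of_lt (lt_of_lt_of_le hhδ (min_le_right _ _))
  have hrep : (fun a' : Fin 4 => ∫ ω, Kh K h (X ω) * Vvec h (X ω) a' * A ω ∂P)
      = fun a' => ∫ u, K u * Vvec 1 u a' *
          ((if h * u < 0 then qm (h * u) else qp (h * u)) * f (h * u)) := by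
    funext a'
    exact rep_integral P X A hXmeas hAint f hfmeas hfnonneg hdens μA hμA qp qm
      hqp.continuous.measurable hqm.continuous.measurable ε hagreeP hagreeM K hKcont hKsupp
      a' hh0 hhε
  rw [hrep]
  set W : Fin 4 → ℝ := fun a' => ∫ u, K u * Vvec 1 u a' *
      ((if h * u < 0 then qm (h * u) else qp (h * u)) * f (h * u)) with hW
  set cv : Fin 4 → ℝ := ![f 0 * qm 0, f 0 * (qp 0 - qm 0),
      h * deriv Gm 0, h * (deriv Gp 0 - deriv Gm 0)] with hcv
  set vf : Fin 4 → ℝ := fun a' => ![kmomP K 2, kmomP K 2, kmomP K 3, kmomP K 3] a' *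
      deriv (deriv Gp) 0 + ![kmomM K 2, 0, kmomM K 3, 0] a' * deriv (deriv Gm) 0 with hvf
  -- integrability of the one-sided smooth integrands
  have hGmint : ∀ j : ℕ, Integrable (fun u : ℝ => u ^ j * K u * Gm (h * u)) := fun j =>
    integrable_of_cont_supp (((continuous_pow j).mul hKcont).mul
      (hGmC.continuous.comp (continuous_const.mul continuous_id)))
      (fun u hu => by rw [hKsupp u hu]; ring)
  have hGpint : ∀ j : ℕ, Integrable (fun u : ℝ => u ^ j * K u * Gp (h * u)) := fun j =>
    integrable_of_cont_supp (((continuous_pow j).mul hKcont).mul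
      (hGpC.continuous.comp (continuous_const.mul continuous_id)))
      (fun u hu => by rw [hKsupp u hu]; ring)
  -- pointwise identifications on the two half-lines
  have hNeg : ∀ u : ℝ, u < 0 →
      ((if h * u < 0 then qm (h * u) else qp (h * u)) * f (h * u)) = Gm (h * u) := by
    intro u hu
    rw [if_pos (mul_neg_of_pos_of_neg hh0 hu), hGm]
  have hPos : ∀ u : ℝ, 0 ≤ u →
      ((if h * u < 0 then qm (h * u) else qp (h * u)) * f (h * u)) = Gp (h * u) := by
    intro u hu
    rw [if_neg (not_lt.mpr (mul_nonneg hh0.le hu)), hGp]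
  have hV0 : ∀ u : ℝ, Vvec 1 u 0 = 1 := fun u => rfl
  have hV1n : ∀ u : ℝ, u < 0 → Vvec 1 u 1 = 0 := fun u hu => by
    show indPos u = 0
    rw [indPos, if_neg (not_le.mpr hu)]
  have hV1p : ∀ u : ℝ, 0 ≤ u → Vvec 1 u 1 = 1 := fun u hu => by
    show indPos u = 1
    rw [indPos, if_pos hu]
  have hV2 : ∀ u : ℝ, Vvec 1 u 2 = u := fun u => by
    show u / 1 = u
    rw [div_one]
  have hV3n : ∀ u : ℝ, u < 0 → Vvec 1 u 3 = 0 := fun u hu => by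
    show indPos u * (u / 1) = 0
    rw [indPos, if_neg (not_le.mpr hu), zero_mul]
  have hV3p : ∀ u : ℝ, 0 ≤ u → Vvec 1 u 3 = u := fun u hu => by
    show indPos u * (u / 1) = u
    rw [indPos, if_pos hu, one_mul, div_one]
  -- EqOn statements
  have eq0m : Set.EqOn (fun u => K u * Vvec 1 u 0 *
      ((if h * u < 0 then qm (h * u) else qp (h * u)) * f (h * u)))
      (fun u : ℝ => u ^ 0 * K u * Gm (h * u)) (Set.Iio 0) := by
    intro u hu
    simp only
    rw [hV0 u, hNeg u hu]
    ring
  have eq0p : Set.EqOn (fun u => K u * Vvec 1 u 0 *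
      ((if h * u < 0 then qm (h * u) else qp (h * u)) * f (h * u)))
      (fun u : ℝ => u ^ 0 * K u * Gp (h * u)) (Set.Ici 0) := by
    intro u hu
    simp only
    rw [hV0 u, hPos u hu]
    ring
  have eq1m : Set.EqOn (fun u => K u * Vvec 1 u 1 *
      ((if h * u < 0 then qm (h * u) else qp (h * u)) * f (h * u)))
      (fun _ : ℝ => (0:ℝ)) (Set.Iio 0) := by
    intro u hu
    simp only
    rw [hV1n u hu]
    ring
  have eq1p : Set.EqOn (fun u => K u * Vvec 1 u 1 *
      ((if h * u < 0 then qm (h * u) else qp (h * u)) * f (h * u)))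
      (fun u : ℝ => u ^ 0 * K u * Gp (h * u)) (Set.Ici 0) := by
    intro u hu
    simp only
    rw [hV1p u hu, hPos u hu]
    ring
  have eq2m : Set.EqOn (fun u => K u * Vvec 1 u 2 *
      ((if h * u < 0 then qm (h * u) else qp (h * u)) * f (h * u)))
      (fun u : ℝ => u ^ 1 * K u * Gm (h * u)) (Set.Iio 0) := by
    intro u hu
    simp only
    rw [hV2 u, hNeg u hu]
    ring
  have eq2p : Set.EqOn (fun u => K u * Vvec 1 u 2 *
      ((if h * u < 0 then qm (h * u) else qp (h * u)) * f (h * u)))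
      (fun u : ℝ => u ^ 1 * K u * Gp (h * u)) (Set.Ici 0) := by
    intro u hu
    simp only
    rw [hV2 u, hPos u hu]
    ring
  have eq3m : Set.EqOn (fun u => K u * Vvec 1 u 3 *
      ((if h * u < 0 then qm (h * u) else qp (h * u)) * f (h * u)))
      (fun _ : ℝ => (0:ℝ)) (Set.Iio 0) := by
    intro u hu
    simp only
    rw [hV3n u hu]
    ring
  have eq3p : Set.EqOn (fun u => K u * Vvec 1 u 3 *
      ((if h * u < 0 then qm (h * u) else qp (h * u)) * f (h * u)))
      (fun u : ℝ => u ^ 1 * K u * Gp (h * u)) (Set.Ici 0) := by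
    intro u hu
    simp only
    rw [hV3p u hu, hPos u hu]
    ring
  have hzero_int : IntegrableOn (fun _ : ℝ => (0:ℝ)) (Set.Iio 0) volume :=
    integrableOn_zero
  -- split identities
  have hW0 : W 0 = (∫ u in Set.Iio 0, u ^ 0 * K u * Gm (h * u))
      + ∫ u in Set.Ioi 0, u ^ 0 * K u * Gp (h * u) := by
    rw [hW]
    simp only
    rw [← intervalIntegral.integral_Iio_add_Ici (b := (0:ℝ))
      (((hGmint 0).integrableOn).congr_fun eq0m.symm measurableSet_Iio)
      (((hGpint 0).integrableOn).congr_fun eq0p.symm measurableSet_Ici)]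
    rw [setIntegral_congr_fun measurableSet_Iio eq0m,
      setIntegral_congr_fun measurableSet_Ici eq0p, integral_Ici_eq_integral_Ioi]
  have hW1 : W 1 = ∫ u in Set.Ioi 0, u ^ 0 * K u * Gp (h * u) := by
    rw [hW]
    simp only
    rw [← intervalIntegral.integral_Iio_add_Ici (b := (0:ℝ))
      (hzero_int.congr_fun eq1m.symm measurableSet_Iio)
      (((hGpint 0).integrableOn).congr_fun eq1p.symm measurableSet_Ici)]
    rw [setIntegral_congr_fun measurableSet_Iio eq1m,
      setIntegral_congr_fun measurableSet_Ici eq1p, integral_Ici_eq_integral_Ioi,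
      integral_zero, zero_add]
  have hW2 : W 2 = (∫ u in Set.Iio 0, u ^ 1 * K u * Gm (h * u))
      + ∫ u in Set.Ioi 0, u ^ 1 * K u * Gp (h * u) := by
    rw [hW]
    simp only
    rw [← intervalIntegral.integral_Iio_add_Ici (b := (0:ℝ))
      (((hGmint 1).integrableOn).congr_fun eq2m.symm measurableSet_Iio)
      (((hGpint 1).integrableOn).congr_fun eq2p.symm measurableSet_Ici)]
    rw [setIntegral_congr_fun measurableSet_Iio eq2m,
      setIntegral_congr_fun measurableSet_Ici eq2p, integral_Ici_eq_integral_Ioi]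
  have hW3 : W 3 = ∫ u in Set.Ioi 0, u ^ 1 * K u * Gp (h * u) := by
    rw [hW]
    simp only
    rw [← intervalIntegral.integral_Iio_add_Ici (b := (0:ℝ))
      (hzero_int.congr_fun eq3m.symm measurableSet_Iio)
      (((hGpint 1).integrableOn).congr_fun eq3p.symm measurableSet_Ici)]
    rw [setIntegral_congr_fun measurableSet_Iio eq3m,
      setIntegral_congr_fun measurableSet_Ici eq3p, integral_Ici_eq_integral_Ioi,
      integral_zero, zero_add]
  -- Taylor expansion bounds for the one-sided integrals
  have hBm0 : |(∫ u in Set.Iio 0, u ^ 0 * K u * Gm (h * u))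
      - Gm 0 * kmomM K 0 - deriv Gm 0 * h * kmomM K 1
      - deriv (deriv Gm) 0 / 2 * h ^ 2 * kmomM K 2| ≤ Cm * h ^ 3 :=
    key_integral hKcont hKnonneg hKsupp hKone hGmC 0 (Set.Iio 0) measurableSet_Iio hCm0 hCm
      h hh0 hh1
  have hBm1 : |(∫ u in Set.Iio 0, u ^ 1 * K u * Gm (h * u))
      - Gm 0 * kmomM K 1 - deriv Gm 0 * h * kmomM K 2
      - deriv (deriv Gm) 0 / 2 * h ^ 2 * kmomM K 3| ≤ Cm * h ^ 3 :=
    key_integral hKcont hKnonneg hKsupp hKone hGmC 1 (Set.Iio 0) measurableSet_Iio hCm0 hCm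
      h hh0 hh1
  have hBp0 : |(∫ u in Set.Ioi 0, u ^ 0 * K u * Gp (h * u))
      - Gp 0 * kmomP K 0 - deriv Gp 0 * h * kmomP K 1
      - deriv (deriv Gp) 0 / 2 * h ^ 2 * kmomP K 2| ≤ Cp * h ^ 3 :=
    key_integral hKcont hKnonneg hKsupp hKone hGpC 0 (Set.Ioi 0) measurableSet_Ioi hCp0 hCp
      h hh0 hh1
  have hBp1 : |(∫ u in Set.Ioi 0, u ^ 1 * K u * Gp (h * u))
      - Gp 0 * kmomP K 1 - deriv Gp 0 * h * kmomP K 2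
      - deriv (deriv Gp) 0 / 2 * h ^ 2 * kmomP K 3| ≤ Cp * h ^ 3 :=
    key_integral hKcont hKnonneg hKsupp hKone hGpC 1 (Set.Ioi 0) measurableSet_Ioi hCp0 hCp
      h hh0 hh1
  have hGm0 : Gm 0 = qm 0 * f 0 := rfl
  have hGp0 : Gp 0 = qp 0 * f 0 := rfl
  have h3nn : (0:ℝ) ≤ h ^ 3 := pow_nonneg hh0.le 3
  -- componentwise error bounds
  have hE0 : |W 0 - (kappa K *ᵥ cv) 0 - h ^ 2 / 2 * vf 0| ≤ (Cm + Cp) * h ^ 3 := by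
    have e : W 0 - (kappa K *ᵥ cv) 0 - h ^ 2 / 2 * vf 0 =
        ((∫ u in Set.Iio 0, u ^ 0 * K u * Gm (h * u))
          - Gm 0 * kmomM K 0 - deriv Gm 0 * h * kmomM K 1
          - deriv (deriv Gm) 0 / 2 * h ^ 2 * kmomM K 2)
        + ((∫ u in Set.Ioi 0, u ^ 0 * K u * Gp (h * u))
          - Gp 0 * kmomP K 0 - deriv Gp 0 * h * kmomP K 1
          - deriv (deriv Gp) 0 / 2 * h ^ 2 * kmomP K 2) := by
      rw [hW0]
      simp only [hcv, hvf, kappa, Matrix.mulVec, dotProduct, Fin.sum_univ_four,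
        Matrix.cons_val', Matrix.cons_val_zero, Matrix.empty_val', Matrix.cons_val_fin_one,
        Matrix.cons_val_one, Matrix.head_cons, Matrix.head_fin_const, Matrix.of_apply,
        Matrix.cons_val_two, Matrix.tail_cons, Matrix.cons_val_three]
      rw [hkmom_split 0, hkmom_split 1, hGm0, hGp0]
      ring
    rw [e]
    have hre : Cm * h ^ 3 + Cp * h ^ 3 = (Cm + Cp) * h ^ 3 := by ring
    exact le_trans (abs_add_le _ _) (by rw [← hre]; exact add_le_add hBm0 hBp0)
  have hE1 : |W 1 - (kappa K *ᵥ cv) 1 - h ^ 2 / 2 * vf 1| ≤ (Cm + Cp) * h ^ 3 := by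
    have e : W 1 - (kappa K *ᵥ cv) 1 - h ^ 2 / 2 * vf 1 =
        ((∫ u in Set.Ioi 0, u ^ 0 * K u * Gp (h * u))
          - Gp 0 * kmomP K 0 - deriv Gp 0 * h * kmomP K 1
          - deriv (deriv Gp) 0 / 2 * h ^ 2 * kmomP K 2) := by
      rw [hW1]
      simp only [hcv, hvf, kappa, Matrix.mulVec, dotProduct, Fin.sum_univ_four,
        Matrix.cons_val', Matrix.cons_val_zero, Matrix.empty_val', Matrix.cons_val_fin_one,
        Matrix.cons_val_one, Matrix.head_cons, Matrix.head_fin_const, Matrix.of_apply,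
        Matrix.cons_val_two, Matrix.tail_cons, Matrix.cons_val_three]
      rw [hGp0]
      ring
    rw [e]
    exact le_trans hBp0 (mul_le_mul_of_nonneg_right (le_add_of_nonneg_left hCm0) h3nn)
  have hE2 : |W 2 - (kappa K *ᵥ cv) 2 - h ^ 2 / 2 * vf 2| ≤ (Cm + Cp) * h ^ 3 := by
    have e : W 2 - (kappa K *ᵥ cv) 2 - h ^ 2 / 2 * vf 2 =
        ((∫ u in Set.Iio 0, u ^ 1 * K u * Gm (h * u))
          - Gm 0 * kmomM K 1 - deriv Gm 0 * h * kmomM K 2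
          - deriv (deriv Gm) 0 / 2 * h ^ 2 * kmomM K 3)
        + ((∫ u in Set.Ioi 0, u ^ 1 * K u * Gp (h * u))
          - Gp 0 * kmomP K 1 - deriv Gp 0 * h * kmomP K 2
          - deriv (deriv Gp) 0 / 2 * h ^ 2 * kmomP K 3) := by
      rw [hW2]
      simp only [hcv, hvf, kappa, Matrix.mulVec, dotProduct, Fin.sum_univ_four,
        Matrix.cons_val', Matrix.cons_val_zero, Matrix.empty_val', Matrix.cons_val_fin_one,
        Matrix.cons_val_one, Matrix.head_cons, Matrix.head_fin_const, Matrix.of_apply,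
        Matrix.cons_val_two, Matrix.tail_cons, Matrix.cons_val_three]
      rw [hkmom_split 1, hkmom_split 2, hGm0, hGp0]
      ring
    rw [e]
    have hre : Cm * h ^ 3 + Cp * h ^ 3 = (Cm + Cp) * h ^ 3 := by ring
    exact le_trans (abs_add_le _ _) (by rw [← hre]; exact add_le_add hBm1 hBp1)
  have hE3 : |W 3 - (kappa K *ᵥ cv) 3 - h ^ 2 / 2 * vf 3| ≤ (Cm + Cp) * h ^ 3 := by
    have e : W 3 - (kappa K *ᵥ cv) 3 - h ^ 2 / 2 * vf 3 =
        ((∫ u in Set.Ioi 0, u ^ 1 * K u * Gp (h * u))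
          - Gp 0 * kmomP K 1 - deriv Gp 0 * h * kmomP K 2
          - deriv (deriv Gp) 0 / 2 * h ^ 2 * kmomP K 3) := by
      rw [hW3]
      simp only [hcv, hvf, kappa, Matrix.mulVec, dotProduct, Fin.sum_univ_four,
        Matrix.cons_val', Matrix.cons_val_zero, Matrix.empty_val', Matrix.cons_val_fin_one,
        Matrix.cons_val_one, Matrix.head_cons, Matrix.head_fin_const, Matrix.of_apply,
        Matrix.cons_val_two, Matrix.tail_cons, Matrix.cons_val_three]
      rw [hGp0]
      ring
    rw [e]
    exact le_trans hBp1 (mul_le_mul_of_nonneg_right (le_add_of_nonneg_left hCm0) h3nn)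
  have hE : ∀ j : Fin 4, |W j - (kappa K *ᵥ cv) j - h ^ 2 / 2 * vf j| ≤ (Cm + Cp) * h ^ 3 := by
    intro j
    fin_cases j
    exacts [hE0, hE1, hE2, hE3]
  -- key algebraic identity
  have hsum : ∀ w : Fin 4 → ℝ, Matrix.mulVec (kappa K)⁻¹ w a = ∑ j, (kappa K)⁻¹ a j * w j := by
    intro w
    simp [Matrix.mulVec, dotProduct]
  have hca : cv a = ∑ j, (kappa K)⁻¹ a j * (kappa K *ᵥ cv) j := by
    have hc : cv = Matrix.mulVec (kappa K)⁻¹ (Matrix.mulVec (kappa K) cv) := by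
      rw [Matrix.mulVec_mulVec, hone, Matrix.one_mulVec]
    calc cv a = Matrix.mulVec (kappa K)⁻¹ (Matrix.mulVec (kappa K) cv) a := by
          conv_lhs => rw [hc]
      _ = ∑ j, (kappa K)⁻¹ a j * (kappa K *ᵥ cv) j := hsum _
  have hkey : Matrix.mulVec (kappa K)⁻¹ W a - cv a
      - h ^ 2 * ((1 / 2 : ℝ) • Matrix.mulVec (kappa K)⁻¹ vf) a
      = ∑ j, (kappa K)⁻¹ a j * (W j - (kappa K *ᵥ cv) j - h ^ 2 / 2 * vf j) := by
    rw [hsum W, hca]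
    simp only [Pi.smul_apply, smul_eq_mul, hsum vf, Finset.mul_sum]
    rw [← Finset.sum_sub_distrib, ← Finset.sum_sub_distrib]
    exact Finset.sum_congr rfl (fun j _ => by ring)
  calc ‖Matrix.mulVec (kappa K)⁻¹ W a - cv a
      - h ^ 2 * ((1 / 2 : ℝ) • Matrix.mulVec (kappa K)⁻¹ vf) a‖
      = |∑ j, (kappa K)⁻¹ a j * (W j - (kappa K *ᵥ cv) j - h ^ 2 / 2 * vf j)| := by
        rw [Real.norm_eq_abs, hkey]
    _ ≤ ∑ j, |(kappa K)⁻¹ a j * (W j - (kappa K *ᵥ cv) j - h ^ 2 / 2 * vf j)| :=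
        Finset.abs_sum_le_sum_abs _ _
    _ ≤ ∑ j : Fin 4, |(kappa K)⁻¹ a j| * ((Cm + Cp) * h ^ 3) := by
        apply Finset.sum_le_sum
        intro j _
        rw [abs_mul]
        exact mul_le_mul_of_nonneg_left (hE j) (abs_nonneg _)
    _ = CA * ((Cm + Cp) * h ^ 3) := by rw [hCA, Finset.sum_mul]
    _ ≤ CA * (Cm + Cp) * ‖h ^ 3‖ := by
        rw [Real.norm_eq_abs, abs_of_nonneg h3nn, ← mul_assoc]

end
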